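/- Let l, h, n be natural numbers with n ≥ 1, let H be a real l×n matrix, let W₁, W₂ be real l×h matrices, let w : Fin h → ℝ, and let τ > 0. Define ξ(H) : Fin n → ℝ by ξ(H)_j = ∑_{k} w_k · tanh((W₁ᵀ·H)_{k,j}) · sigm((W₂ᵀ·H)_{k,j}) and the attention scores AS(H) = softmax(ξ(H)/τ). Then for every permutation σ of Fin n, AS(H · P_σ) = AS(H) ∘ σ. -/

import Mathlib

open Matrix BigOperators

/-- Permutation matrix of `σ`: `(P σ) i j = 1` if `i = σ j`, else `0`. -/
noncomputable def permMat {n : ℕ} (σ : Equiv.Perm (Fin n)) : Matrix (Fin n) (Fin n) ℝ :=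
  fun i j => if i = σ j then 1 else 0

/-- Sigmoid function. -/
noncomputable def sigm (x : ℝ) : ℝ := 1 / (1 + Real.exp (-x))

/-- Attention pre-scores `ξ(H)`. -/
noncomputable def xi {l h n : ℕ} (W₁ W₂ : Matrix (Fin l) (Fin h) ℝ) (w : Fin h → ℝ)
    (H : Matrix (Fin l) (Fin n) ℝ) : Fin n → ℝ :=
  fun j => ∑ k, w k * Real.tanh ((W₁ᵀ * H) k j) * sigm ((W₂ᵀ * H) k j)

/-- Softmax. -/
noncomputable def softmax {n : ℕ} (x : Fin n → ℝ) : Fin n → ℝ :=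
  fun j => Real.exp (x j) / ∑ i, Real.exp (x i)

/-- Attention scores `AS(H) = softmax(ξ(H)/τ)`. -/
noncomputable def AS {l h n : ℕ} (W₁ W₂ : Matrix (Fin l) (Fin h) ℝ) (w : Fin h → ℝ) (τ : ℝ)
    (H : Matrix (Fin l) (Fin n) ℝ) : Fin n → ℝ :=
  softmax (fun j => xi W₁ W₂ w H j / τ)

theorem mul_permMat_apply {m : Type*} {n : ℕ} (M : Matrix m (Fin n) ℝ)
    (σ : Equiv.Perm (Fin n)) (i : m) (j : Fin n) : (M * permMat σ) i j = M i (σ j) := by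
  simp [Matrix.mul_apply, permMat]

theorem xi_mul_permMat {l h n : ℕ} (W₁ W₂ : Matrix (Fin l) (Fin h) ℝ) (w : Fin h → ℝ)
    (H : Matrix (Fin l) (Fin n) ℝ) (σ : Equiv.Perm (Fin n)) :
    xi W₁ W₂ w (H * permMat σ) = xi W₁ W₂ w H ∘ σ := by
  ext j
  simp only [xi, Function.comp_apply, ← Matrix.mul_assoc, mul_permMat_apply]

theorem softmax_comp_perm {n : ℕ} (x : Fin n → ℝ) (σ : Equiv.Perm (Fin n)) :
    softmax (x ∘ σ) = softmax x ∘ σ := by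
  ext j
  simp only [softmax, Function.comp_apply, Equiv.sum_comp σ (fun i => Real.exp (x i))]

theorem AS_mul_permMat_general {l h n : ℕ} (H : Matrix (Fin l) (Fin n) ℝ)
    (W₁ W₂ : Matrix (Fin l) (Fin h) ℝ) (w : Fin h → ℝ) (τ : ℝ)
    (σ : Equiv.Perm (Fin n)) :
    AS W₁ W₂ w τ (H * permMat σ) = AS W₁ W₂ w τ H ∘ σ := by
  have hscores : (fun j => xi W₁ W₂ w (H * permMat σ) j / τ) =
      (fun j => xi W₁ W₂ w H j / τ) ∘ σ := by
    rw [xi_mul_permMat]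
    rfl
  rw [AS, AS, hscores, softmax_comp_perm]

/-- The attention scores are permutation equivariant: `AS(H · P_σ) = AS(H) ∘ σ`. -/
theorem AS_mul_permMat {l h n : ℕ} (hn : 1 ≤ n) (H : Matrix (Fin l) (Fin n) ℝ)
    (W₁ W₂ : Matrix (Fin l) (Fin h) ℝ) (w : Fin h → ℝ) (τ : ℝ) (hτ : 0 < τ)
    (σ : Equiv.Perm (Fin n)) :
    AS W₁ W₂ w τ (H * permMat σ) = AS W₁ W₂ w τ H ∘ σ :=
  AS_mul_permMat_general H W₁ W₂ w τ σ
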